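/- arXiv:math/0310111 — 5 statements merged into one kernel-verified Lean document; each statement's English description precedes it below -/
import Mathlib

section
/- If p and q are coprime positive integers, then in the polynomial ring ℚ[X] the product (X^p - 1) * (X^q - 1) divides (X^{p*q} - 1) * (X - 1). -/
open Polynomial

theorem torus_knot_alexander_laurent (p q : ℕ) (hp : 0 < p) (hq : 0 < q)
    (hpq : Nat.Coprime p q) :
    ((X : ℚ[X]) ^ p - 1) * ((X : ℚ[X]) ^ q - 1) ∣
      ((X : ℚ[X]) ^ (p * q) - 1) * ((X : ℚ[X]) - 1) := by
  rw [← prod_cyclotomic_eq_X_pow_sub_one hp ℚ, ← prod_cyclotomic_eq_X_pow_sub_one hq ℚ,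
    ← prod_cyclotomic_eq_X_pow_sub_one (Nat.mul_pos hp hq) ℚ,
    ← Finset.prod_union_inter]
  have hinter : p.divisors ∩ q.divisors = {1} := by
    ext d
    simp only [Finset.mem_inter, Nat.mem_divisors, Finset.mem_singleton]
    constructor
    · rintro ⟨⟨hdp, _⟩, ⟨hdq, _⟩⟩
      exact Nat.eq_one_of_dvd_coprimes hpq hdp hdq
    · rintro rfl
      exact ⟨⟨one_dvd _, hp.ne'⟩, ⟨one_dvd _, hq.ne'⟩⟩
  rw [hinter, Finset.prod_singleton, cyclotomic_one]
  refine mul_dvd_mul ?_ dvd_rfl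
  apply Finset.prod_dvd_prod_of_subset
  intro d hd
  rcases Finset.mem_union.mp hd with h | h <;>
    simp only [Nat.mem_divisors] at h ⊢ <;>
    exact ⟨h.1.trans (by simp), by positivity⟩
end

section
/- Let p and q be coprime positive integers and let Q ∈ ℚ[X] be the (unique) polynomial satisfying Q * (X^p - 1) * (X^q - 1) = (X^{p*q} - 1) * (X - 1). Then Q evaluated at 1 equals 1. -/
open Polynomial

theorem torus_knot_alexander_eval_one (p q : ℕ) (hp : 0 < p) (hq : 0 < q)
    (hpq : Nat.Coprime p q) (Q : ℚ[X])
    (hQ : Q * ((X : ℚ[X]) ^ p - 1) * ((X : ℚ[X]) ^ q - 1) =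
        ((X : ℚ[X]) ^ (p * q) - 1) * ((X : ℚ[X]) - 1)) :
    Q.eval 1 = 1 := by
  have hx : ((X : ℚ[X]) - 1) ≠ 0 := X_sub_C_ne_zero 1
  have hfac : ∀ n : ℕ, (X : ℚ[X]) ^ n - 1 = (∑ i ∈ Finset.range n, X ^ i) * (X - 1) :=
    fun n => (geom_sum_mul (X : ℚ[X]) n).symm
  rw [hfac p, hfac q, hfac (p * q)] at hQ
  have h1 : (Q * (∑ i ∈ Finset.range p, (X : ℚ[X]) ^ i) * (∑ i ∈ Finset.range q, X ^ i)) *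
      ((X - 1) * (X - 1)) = (∑ i ∈ Finset.range (p * q), X ^ i) * ((X - 1) * (X - 1)) := by
    linear_combination hQ
  have key := mul_right_cancel₀ (mul_ne_zero hx hx) h1
  have h2 := congrArg (eval 1) key
  simp only [eval_mul, eval_finset_sum, eval_pow, eval_X, one_pow, Finset.sum_const,
    Finset.card_range, nsmul_eq_mul, mul_one] at h2
  have hp' : (p : ℚ) ≠ 0 := Nat.cast_ne_zero.mpr hp.ne'
  have hq' : (q : ℚ) ≠ 0 := Nat.cast_ne_zero.mpr hq.ne'
  have h3 : (Q.eval 1 - 1) * ((p : ℚ) * q) = 0 := by push_cast at h2; linear_combination h2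
  rcases mul_eq_zero.mp h3 with h | h
  · linarith
  · exact absurd h (mul_ne_zero hp' hq')
end

section
/- Let p and q be positive integers, let f : ℝ → ℝ be defined by f(x) = (1/2) * log(sinh(x/2)/(x/2)), let f' denote its derivative on ℝ \ {0}, and set c'(x) = p*f'(p*x) + q*f'(q*x) - p*q*f'(p*q*x). Write coth(u) = cosh(u)/sinh(u). Then for all nonzero real numbers x and y: (1/2)*( f'(p*y)*f'(q*x) + f'(p*x)*f'(q*y) - c'(x)*f'(p*q*y) - c'(y)*f'(p*q*x) ) = (1/32)*( 2*p*q*coth(p*q*x/2)*coth(p*q*y/2) - p*coth(p*x/2)*coth(p*q*y/2) - q*coth(q*x/2)*coth(p*q*y/2) - p*coth(p*q*x/2)*coth(p*y/2) - q*coth(p*q*x/2)*coth(q*y/2) + coth(p*x/2)*coth(q*y/2) + coth(q*x/2)*coth(p*y/2) ). -/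
/-!
Away from `0` one has `f' u = coth (u / 2) / 4 - 1 / (2 u)`. Substituting this, the identity
becomes a rational identity in `x`, `y` and the six values of `coth`, which holds with those
values as free variables: the `1 / x` and `1 / y` terms cancel after symmetrization.
-/

open Real

lemma hasDerivAt_half_log_sinh_half_div {x : ℝ} (hx : x ≠ 0) :
    HasDerivAt (fun u : ℝ => (1 / 2) * Real.log (Real.sinh (u / 2) / (u / 2)))
      ((1 / 4) * (Real.cosh (x / 2) / Real.sinh (x / 2)) - 1 / (2 * x)) x := by
  have hx2 : x / 2 ≠ 0 := div_ne_zero hx two_ne_zero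
  have hsinh : Real.sinh (x / 2) ≠ 0 := Real.sinh_ne_zero.mpr hx2
  have hhalf : HasDerivAt (fun u : ℝ => u / 2) (1 / 2) x := (hasDerivAt_id x).div_const 2
  have hquot := (hhalf.sinh.fun_div hhalf hx2).log (div_ne_zero hsinh hx2)
  refine (hquot.const_mul (1 / 2)).congr_deriv ?_
  field_simp
  ring

lemma two_loop_symmetrized_rational_identity (p q x y A B C A' B' C' : ℝ)
    (hp : p ≠ 0) (hq : q ≠ 0) (hx : x ≠ 0) (hy : y ≠ 0) :
    let g (a u : ℝ) := (1 / 4) * a - 1 / (2 * u)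
    (1 / 2) * (g A' (p * y) * g B (q * x) + g A (p * x) * g B' (q * y)
        - (p * g A (p * x) + q * g B (q * x) - p * q * g C (p * q * x)) * g C' (p * q * y)
        - (p * g A' (p * y) + q * g B' (q * y) - p * q * g C' (p * q * y)) * g C (p * q * x)) =
      (1 / 32) * (2 * p * q * C * C' - p * A * C' - q * B * C'
        - p * C * A' - q * C * B' + A * B' + B * A') := by
  intro g
  simp only [g]
  field_simp
  ring

theorem torus_knot_two_loop_symmetrized (p q : ℕ) (hp : 0 < p) (hq : 0 < q)
    (f f' c' coth : ℝ → ℝ)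
    (hf : ∀ x : ℝ, f x = (1 / 2) * Real.log (Real.sinh (x / 2) / (x / 2)))
    (hf' : ∀ x : ℝ, x ≠ 0 → HasDerivAt f (f' x) x)
    (hc' : ∀ x : ℝ, c' x = (p : ℝ) * f' ((p : ℝ) * x) + (q : ℝ) * f' ((q : ℝ) * x) -
        (p : ℝ) * q * f' ((p : ℝ) * q * x))
    (hcoth : ∀ u : ℝ, coth u = Real.cosh u / Real.sinh u) :
    ∀ x y : ℝ, x ≠ 0 → y ≠ 0 →
      (1 / 2) * (f' ((p : ℝ) * y) * f' ((q : ℝ) * x) + f' ((p : ℝ) * x) * f' ((q : ℝ) * y)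
          - c' x * f' ((p : ℝ) * q * y) - c' y * f' ((p : ℝ) * q * x)) =
        (1 / 32) *
          (2 * (p : ℝ) * q * coth ((p : ℝ) * q * x / 2) * coth ((p : ℝ) * q * y / 2)
            - (p : ℝ) * coth ((p : ℝ) * x / 2) * coth ((p : ℝ) * q * y / 2)
            - (q : ℝ) * coth ((q : ℝ) * x / 2) * coth ((p : ℝ) * q * y / 2)
            - (p : ℝ) * coth ((p : ℝ) * q * x / 2) * coth ((p : ℝ) * y / 2)
            - (q : ℝ) * coth ((p : ℝ) * q * x / 2) * coth ((q : ℝ) * y / 2)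
            + coth ((p : ℝ) * x / 2) * coth ((q : ℝ) * y / 2)
            + coth ((q : ℝ) * x / 2) * coth ((p : ℝ) * y / 2)) := by
  intro x y hx hy
  have hf_eq : f = fun u : ℝ => (1 / 2) * Real.log (Real.sinh (u / 2) / (u / 2)) := funext hf
  have hf'_eq : ∀ u : ℝ, u ≠ 0 → f' u = (1 / 4) * coth (u / 2) - 1 / (2 * u) := fun u hu => by
    rw [hcoth]
    exact (hf' u hu).unique (hf_eq ▸ hasDerivAt_half_log_sinh_half_div hu)
  have hp0 : (p : ℝ) ≠ 0 := Nat.cast_ne_zero.mpr hp.ne'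
  have hq0 : (q : ℝ) ≠ 0 := Nat.cast_ne_zero.mpr hq.ne'
  rw [hc' x, hc' y, hf'_eq _ (by positivity), hf'_eq _ (by positivity),
    hf'_eq _ (by positivity), hf'_eq _ (by positivity), hf'_eq _ (by positivity),
    hf'_eq _ (by positivity)]
  exact two_loop_symmetrized_rational_identity _ _ x y _ _ _ _ _ _ hp0 hq0 hx hy
end

section
/- Let n and r be coprime positive integers, and consider in ℤ[t] the polynomial P = (t^n + 1) * (1 + t^n + t^{2n} + ... + t^{(r-1)n}), i.e. P = (t^n + 1) * (∑_{i=0}^{r-1} t^{n*i}). Then the sum over all natural numbers m divisible by r of (coefficient of t^m in P) times t^m equals 1 + t^{n*r}. -/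
/-! Expanding, `P = ∑_{i<r} (X^(n*i) + X^(n*(i+1)))`. Since `n` is coprime to `r`, `r ∣ n*k` iff
`r ∣ k`, so the only exponents divisible by `r` are `n*0` and `n*r`. -/

open Polynomial Finset

theorem Nat.Coprime.dvd_mul_iff_eq_zero_of_lt {n r i : ℕ} (hnr : n.Coprime r) (hi : i < r) :
    r ∣ n * i ↔ i = 0 := by
  rw [hnr.symm.dvd_mul_left]
  exact ⟨(Nat.eq_zero_of_dvd_of_lt · hi), by rintro rfl; exact dvd_zero r⟩

theorem Nat.Coprime.dvd_mul_succ_iff_of_lt {n r i : ℕ} (hnr : n.Coprime r) (hi : i < r) :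
    r ∣ n * (i + 1) ↔ i = r - 1 := by
  rw [hnr.symm.dvd_mul_left]
  refine ⟨fun h => ?_, fun h => ⟨1, by omega⟩⟩
  have := Nat.le_of_dvd i.succ_pos h
  omega

namespace Polynomial

variable {R : Type*} [Semiring R]

noncomputable def dvdPart (r : ℕ) : R[X] →ₗ[R] R[X] :=
  lsum fun m => if r ∣ m then monomial m else 0

theorem dvdPart_apply (r : ℕ) (p : R[X]) :
    dvdPart r p = ∑ m ∈ p.support, if r ∣ m then C (p.coeff m) * X ^ m else 0 := by
  refine Finset.sum_congr rfl fun m _ => ?_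
  split_ifs with h <;> simp [h, C_mul_X_pow_eq_monomial]

theorem dvdPart_X_pow (r m : ℕ) : dvdPart r (X ^ m : R[X]) = if r ∣ m then X ^ m else 0 := by
  rw [← monomial_one_right_eq_X_pow, dvdPart, lsum_apply, sum_monomial_index _ _ (by simp)]
  split_ifs <;> simp

variable {n r : ℕ}

theorem sum_range_dvdPart_X_pow_mul (hnr : n.Coprime r) (hr : 0 < r) :
    ∑ i ∈ range r, dvdPart r (X ^ (n * i) : R[X]) = 1 := calc
  _ = ∑ i ∈ range r, if i = 0 then (X ^ (n * i) : R[X]) else 0 :=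
    sum_congr rfl fun i hi => by
      rw [dvdPart_X_pow]; exact if_congr (hnr.dvd_mul_iff_eq_zero_of_lt (mem_range.1 hi)) rfl rfl
  _ = 1 := by rw [sum_ite_eq_of_mem' _ _ _ (mem_range.2 hr), mul_zero, pow_zero]

theorem sum_range_dvdPart_X_pow_mul_succ (hnr : n.Coprime r) (hr : 0 < r) :
    ∑ i ∈ range r, dvdPart r (X ^ (n * (i + 1)) : R[X]) = X ^ (n * r) := calc
  _ = ∑ i ∈ range r, if i = r - 1 then (X ^ (n * (i + 1)) : R[X]) else 0 :=
    sum_congr rfl fun i hi => by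
      rw [dvdPart_X_pow]; exact if_congr (hnr.dvd_mul_succ_iff_of_lt (mem_range.1 hi)) rfl rfl
  _ = X ^ (n * r) := by
    rw [sum_ite_eq_of_mem' _ _ _ (mem_range.2 (by omega)), Nat.sub_add_cancel hr]

end Polynomial

theorem lift_map_f1_general (n r : ℕ) (hr : 0 < r) (hnr : Nat.Coprime n r)
    (P : ℤ[X])
    (hP : P = ((X : ℤ[X]) ^ n + 1) * ∑ i ∈ Finset.range r, (X : ℤ[X]) ^ (n * i)) :
    (∑ m ∈ P.support, if r ∣ m then Polynomial.C (P.coeff m) * (X : ℤ[X]) ^ m else 0) =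
      1 + (X : ℤ[X]) ^ (n * r) := by
  have hP' : P = ∑ i ∈ range r, (X ^ (n * i) + X ^ (n * (i + 1))) := by
    rw [hP, mul_sum]
    exact sum_congr rfl fun i _ => by ring
  rw [← dvdPart_apply, hP', map_sum]
  simp only [map_add, sum_add_distrib]
  rw [sum_range_dvdPart_X_pow_mul hnr hr, sum_range_dvdPart_X_pow_mul_succ hnr hr]

theorem lift_map_f1 (n r : ℕ) (hn : 0 < n) (hr : 0 < r) (hnr : Nat.Coprime n r)
    (P : ℤ[X])
    (hP : P = ((X : ℤ[X]) ^ n + 1) * ∑ i ∈ Finset.range r, (X : ℤ[X]) ^ (n * i)) :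
    (∑ m ∈ P.support, if r ∣ m then Polynomial.C (P.coeff m) * (X : ℤ[X]) ^ m else 0) =
      1 + (X : ℤ[X]) ^ (n * r) :=
  lift_map_f1_general n r hr hnr P hP
end

section
/- Let n and r be coprime positive integers, and consider in ℤ[t] the polynomial P = t^n * (1 + t^n + t^{2n} + ... + t^{(r-1)n})^2, i.e. P = t^n * (∑_{i=0}^{r-1} t^{n*i})^2. Then the sum over all natural numbers m divisible by r of (coefficient of t^m in P) times t^m equals r * t^{n*r}. -/
/-!
Expanding the square, `P = ∑_{i, j < r} t^(n(i + j + 1))`, so the coefficient of `t^m` in `P` counts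
the pairs `(i, j) ∈ [0, r)²` with `n(i + j + 1) = m`. If `r ∣ m`, coprimality gives `r ∣ i + j + 1`,
and `0 < i + j + 1 < 2r` forces `i + j + 1 = r`: the only surviving exponent is `m = nr`,
reached by the `r` pairs `(i, r - 1 - i)`.
-/

open Polynomial Finset

namespace Polynomial

variable {R : Type*} [Semiring R]

theorem coeff_sum_ite_dvd_C_mul_X_pow (P : R[X]) (r k : ℕ) :
    (∑ m ∈ P.support, if r ∣ m then C (P.coeff m) * X ^ m else 0).coeff k =
      if r ∣ k then P.coeff k else 0 := by
  simp_rw [finsetSum_coeff, apply_ite (coeff · k), coeff_C_mul_X_pow, coeff_zero, ← ite_and,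
    and_comm, ite_and, sum_ite_eq]
  by_cases hk : k ∈ P.support
  · rw [if_pos hk]
  · rw [if_neg hk, notMem_support_iff.mp hk, ite_self]

theorem coeff_sum_X_pow {ι : Type*} (s : Finset ι) (f : ι → ℕ) (k : ℕ) :
    (∑ i ∈ s, (X : R[X]) ^ f i).coeff k = #{i ∈ s | f i = k} := by
  simp only [finsetSum_coeff, coeff_X_pow, eq_comm (a := k), sum_boole]

theorem X_pow_mul_sum_X_pow_mul_sq (n r : ℕ) :
    (X : R[X]) ^ n * (∑ i ∈ range r, X ^ (n * i)) ^ 2 =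
      ∑ p ∈ range r ×ˢ range r, X ^ (n * (p.1 + p.2 + 1)) := by
  rw [sq, sum_mul_sum, ← sum_product', mul_sum]
  refine sum_congr rfl fun p _ => ?_
  rw [← pow_add, ← pow_add]
  ring_nf

end Polynomial

theorem card_filter_add_add_one_eq (r : ℕ) :
    #{p ∈ range r ×ˢ range r | p.1 + p.2 + 1 = r} = r := by
  conv_rhs => rw [← card_range r]
  refine card_nbij' Prod.fst (fun i => (i, r - 1 - i)) ?_ ?_ ?_ ?_
  · intro p hp
    simp only [coe_filter, mem_product, mem_range, Set.mem_ofPred_eq] at hp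
    simpa using hp.1.1
  · intro i hi
    simp only [coe_range, Set.mem_Iio] at hi
    simp only [coe_filter, mem_product, mem_range, Set.mem_ofPred_eq]
    omega
  · intro p hp
    simp only [coe_filter, mem_product, mem_range, Set.mem_ofPred_eq] at hp
    ext
    · rfl
    · simp only
      omega
  · intro i _
    rfl

theorem card_filter_mul_add_add_one_eq_of_dvd {n r k : ℕ} (hnr : n.Coprime r) (hk : r ∣ k) :
    #{p ∈ range r ×ˢ range r | n * (p.1 + p.2 + 1) = k} = if k = n * r then r else 0 := by
  have hsum : ∀ p ∈ range r ×ˢ range r, n * (p.1 + p.2 + 1) = k → p.1 + p.2 + 1 = r := by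
    intro p hp hpk
    simp only [mem_product, mem_range] at hp
    have hdvd : r ∣ p.1 + p.2 + 1 := hnr.symm.dvd_of_dvd_mul_left (hpk ▸ hk)
    exact Nat.eq_of_dvd_of_lt_two_mul (by omega) hdvd (by omega)
  split_ifs with hkr
  · subst hkr
    conv_rhs => rw [← card_filter_add_add_one_eq r]
    exact congrArg card (filter_congr fun p hp => ⟨hsum p hp, fun h => by rw [h]⟩)
  · refine card_eq_zero.mpr (filter_eq_empty_iff.mpr fun p hp hpk => hkr ?_)
    rw [← hpk, hsum p hp hpk]

theorem lift_map_f2_general (n r : ℕ) (hnr : Nat.Coprime n r)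
    (P : ℤ[X])
    (hP : P = (X : ℤ[X]) ^ n * (∑ i ∈ Finset.range r, (X : ℤ[X]) ^ (n * i)) ^ 2) :
    (∑ m ∈ P.support, if r ∣ m then Polynomial.C (P.coeff m) * (X : ℤ[X]) ^ m else 0) =
      Polynomial.C (r : ℤ) * (X : ℤ[X]) ^ (n * r) := by
  ext k
  rw [coeff_sum_ite_dvd_C_mul_X_pow, coeff_C_mul_X_pow, hP, X_pow_mul_sum_X_pow_mul_sq,
    coeff_sum_X_pow]
  by_cases hk : r ∣ k
  · rw [if_pos hk, card_filter_mul_add_add_one_eq_of_dvd hnr hk]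
    rw [Nat.cast_ite, Nat.cast_zero]
  · have : k ≠ n * r := fun h => hk (h ▸ dvd_mul_left r n)
    rw [if_neg hk, if_neg this]

theorem lift_map_f2 (n r : ℕ) (hn : 0 < n) (hr : 0 < r) (hnr : Nat.Coprime n r)
    (P : ℤ[X])
    (hP : P = (X : ℤ[X]) ^ n * (∑ i ∈ Finset.range r, (X : ℤ[X]) ^ (n * i)) ^ 2) :
    (∑ m ∈ P.support, if r ∣ m then Polynomial.C (P.coeff m) * (X : ℤ[X]) ^ m else 0) =
      Polynomial.C (r : ℤ) * (X : ℤ[X]) ^ (n * r) :=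
  lift_map_f2_general n r hnr P hP
end
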